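/- arXiv:2401.03335 — 2 statements merged into one kernel-verified Lean document; each statement's English description precedes it below -/
import Mathlib

section
/- Let (G_i)_{i∈I} be a family of nontrivial groups, let i₀ ∈ I, and let N be a nontrivial normal subgroup of G_{i₀}. Let H be the normal closure in the free product ∐_{i∈I} G_i of the image of N under the canonical inclusion G_{i₀} → ∐_{i∈I} G_i. Then there exists a subgroup K of H such that H is the internal free product of the image of N and K; that is, the canonical homomorphism from the (external) free product N ∗ K to the free product ∐_{i∈I} G_i, induced by the inclusion of N via the canonical map G_{i₀} → ∐_{i∈I} G_i and the inclusion of K, is injective and has image exactly H. -/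
/-!
Let `Q = ∐ᵢ Gᵢ ⧸ Nᵢ` and let `σ` lift reduced words of `Q` to `∐ᵢ Gᵢ` letter by letter, along a
section of each `Gᵢ → Gᵢ ⧸ Nᵢ` fixing `1`. If `w = b r` with `b ∈ Gᵢ ⧸ Nᵢ` and `r` not starting in
factor `i`, then for `x ∈ Gᵢ`
  `x σ(w) = σ(x̄ w) · σ(r)⁻¹ n σ(r)` with `n = σ(x̄ b)⁻¹ x σ(b) ∈ Nᵢ`.
Let `F` be the free product of copies of `Nᵢ` indexed by such pairs `(i, r)` and `ψ : F → ∐ᵢ Gᵢ`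
send the copy `(i, r)` to `σ(r)⁻¹ Nᵢ σ(r)`. The formula defines an action of `∐ᵢ Gᵢ` on pairs
`(w, f)` for which `(w, f) ↦ σ(w) ψ(f)` is equivariant. As `ψ(f)` moves `(1, 1)` to `(1, f)`,
`ψ` is injective; as every `g` is `σ(w) ψ(f)`, every conjugate of `Nᵢ` lies in the range of `ψ`,
which is therefore the normal closure of the `Nᵢ`. Taking `Nᵢ = 1` for `i ≠ i₀`, the copy
indexed by `(i₀, 1)` is `N`, and the remaining factors generate a free complement `K`.
-/

open Function

namespace QuotientGroup

variable {G : Type*} [Group G] (N : Subgroup G) [N.Normal]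

open scoped Classical in
noncomputable def cosetRep (q : G ⧸ N) : G := if q = 1 then 1 else q.out

@[simp] theorem cosetRep_one : cosetRep N 1 = 1 := if_pos rfl

@[simp] theorem mk_cosetRep (q : G ⧸ N) : ((cosetRep N q : G) : G ⧸ N) = q := by
  unfold cosetRep
  split_ifs with h
  · rw [h, QuotientGroup.mk_one]
  · exact q.out_eq'

noncomputable def cosetCocycle (x : G) (q : G ⧸ N) : N :=
  ⟨(cosetRep N (x * q))⁻¹ * x * cosetRep N q, by
    rw [← QuotientGroup.eq_one_iff, QuotientGroup.mk_mul, QuotientGroup.mk_mul,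
      QuotientGroup.mk_inv, mk_cosetRep, mk_cosetRep, mul_inv_rev, inv_mul_cancel_right,
      inv_mul_cancel]⟩

theorem cosetRep_mul_cosetCocycle (x : G) (q : G ⧸ N) :
    cosetRep N (x * q) * cosetCocycle N x q = x * cosetRep N q := by
  simp [cosetCocycle, mul_assoc]

theorem cosetCocycle_mul (x y : G) (q : G ⧸ N) :
    cosetCocycle N (x * y) q = cosetCocycle N x (y * q) * cosetCocycle N y q := by
  ext
  simp [cosetCocycle, mul_assoc]

@[simp] theorem cosetCocycle_one (q : G ⧸ N) : cosetCocycle N 1 q = 1 := by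
  ext
  simp [cosetCocycle]

@[simp] theorem cosetCocycle_cosetRep (q : G ⧸ N) : cosetCocycle N (cosetRep N q) 1 = 1 := by
  ext
  simp [cosetCocycle]

theorem cosetCocycle_of_mem {n : G} (hn : n ∈ N) : cosetCocycle N n 1 = ⟨n, hn⟩ := by
  ext
  simp [cosetCocycle, (QuotientGroup.eq_one_iff n).2 hn]

end QuotientGroup

namespace Monoid.CoprodI

section SplitFactor

variable {ι : Type*} {M : ι → Type*} [∀ i, Group (M i)] {Γ : Type*} [Group Γ]

open scoped Classical in
noncomputable def splitFactor (φ : ∀ i, M i →* Γ) (i₀ : ι) :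
    CoprodI M →* Coprod (φ i₀).range (⨆ (i) (_ : i ≠ i₀), (φ i).range : Subgroup Γ) :=
  lift fun i =>
    if h : i = i₀ then by subst h; exact Coprod.inl.comp (φ i).rangeRestrict
    else Coprod.inr.comp <| (Subgroup.inclusion <|
      le_iSup₂ (f := fun j (_ : j ≠ i₀) => (φ j).range) i h).comp (φ i).rangeRestrict

theorem splitFactor_of_self (φ : ∀ i, M i →* Γ) (i₀ : ι) (x : M i₀) :
    splitFactor φ i₀ (of x) = Coprod.inl ((φ i₀).rangeRestrict x) := by
  rw [splitFactor, lift_of, dif_pos rfl]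
  rfl

theorem splitFactor_of_ne (φ : ∀ i, M i →* Γ) {i₀ i : ι} (h : i ≠ i₀) (x : M i) :
    splitFactor φ i₀ (of x) =
      Coprod.inr ⟨φ i x, le_iSup₂ (f := fun j (_ : j ≠ i₀) => (φ j).range) i h ⟨x, rfl⟩⟩ := by
  rw [splitFactor, lift_of, dif_neg h]
  rfl

theorem coprodLift_comp_splitFactor (φ : ∀ i, M i →* Γ) (i₀ : ι) :
    (Coprod.lift (φ i₀).range.subtype (⨆ (i) (_ : i ≠ i₀), (φ i).range).subtype).comp
      (splitFactor φ i₀) = lift φ := by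
  refine ext_hom _ _ fun i => MonoidHom.ext fun x => ?_
  by_cases h : i = i₀
  · subst h
    simp [splitFactor_of_self]
  · simp [splitFactor_of_ne φ h]

theorem splitFactor_surjective (φ : ∀ i, M i →* Γ) (i₀ : ι) :
    Surjective (splitFactor φ i₀) := by
  rw [← MonoidHom.range_eq_top, eq_top_iff, ← Coprod.range_inl_sup_range_inr, sup_le_iff]
  constructor
  · rintro _ ⟨⟨_, x, rfl⟩, rfl⟩
    exact ⟨of x, splitFactor_of_self φ i₀ x⟩
  · rintro _ ⟨⟨k, hk⟩, rfl⟩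
    induction hk using Subgroup.iSup_induction' with
    | hp i k hk =>
      rcases eq_or_ne i i₀ with rfl | h
      · simp only [ne_eq, not_true_eq_false, iSup_false, Subgroup.mem_bot] at hk
        subst hk
        exact ⟨1, (map_one _).trans (map_one Coprod.inr).symm⟩
      · obtain ⟨x, rfl⟩ := (iSup_pos (α := Subgroup Γ) h).le hk
        exact ⟨of x, splitFactor_of_ne φ h x⟩
    | h1 => exact ⟨1, (map_one _).trans (map_one Coprod.inr).symm⟩
    | hmul _ _ _ _ ha hb =>
      obtain ⟨a, ha⟩ := ha
      obtain ⟨b, hb⟩ := hb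
      exact ⟨a * b, by rw [map_mul, ha, hb, ← map_mul]; rfl⟩

theorem injective_coprodLift_range_iSup (φ : ∀ i, M i →* Γ) (hφ : Injective (lift φ)) (i₀ : ι) :
    Injective (Coprod.lift (φ i₀).range.subtype (⨆ (i) (_ : i ≠ i₀), (φ i).range).subtype) := by
  intro x y hxy
  obtain ⟨x, rfl⟩ := splitFactor_surjective φ i₀ x
  obtain ⟨y, rfl⟩ := splitFactor_surjective φ i₀ y
  refine congrArg _ (hφ ?_)
  rwa [← MonoidHom.comp_apply, ← MonoidHom.comp_apply, coprodLift_comp_splitFactor] at hxy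

theorem range_coprodLift_range_iSup (φ : ∀ i, M i →* Γ) (i₀ : ι) :
    (Coprod.lift (φ i₀).range.subtype (⨆ (i) (_ : i ≠ i₀), (φ i).range).subtype).range =
      (lift φ).range := by
  rw [Coprod.range_lift, Subgroup.range_subtype, Subgroup.range_subtype, range_eq_iSup]
  exact (iSup_split_single (fun i => (φ i).range) i₀).symm

theorem exists_free_factor_complement (φ : ∀ i, M i →* Γ) (hφ : Injective (lift φ)) (i₀ : ι) :
    ∃ K : Subgroup Γ, K ≤ (lift φ).range ∧
      Injective (Coprod.lift (φ i₀).range.subtype K.subtype) ∧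
      (Coprod.lift (φ i₀).range.subtype K.subtype).range = (lift φ).range := by
  refine ⟨⨆ (i) (_ : i ≠ i₀), (φ i).range, ?_, injective_coprodLift_range_iSup φ hφ i₀,
    range_coprodLift_range_iSup φ i₀⟩
  rw [range_eq_iSup]
  exact iSup₂_le fun i _ => le_iSup (fun i => (φ i).range) i

end SplitFactor

section NormalClosure

open QuotientGroup Word

variable {ι : Type*} {G : ι → Type*} [∀ i, Group (G i)] (N : ∀ i, Subgroup (G i))
  [∀ i, (N i).Normal]

/- Naming the family `fun i => G i ⧸ N i` lets elaboration infer it from the type of a letter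
`m : FactorQuotient N i`, e.g. in `of m`. -/
abbrev FactorQuotient (i : ι) : Type _ := G i ⧸ N i

noncomputable def wordLift (w : Word (FactorQuotient N)) : CoprodI G :=
  (w.toList.map fun l => of (cosetRep (N l.1) l.2)).prod

@[simp] theorem wordLift_empty : wordLift N empty = 1 := rfl

theorem wordLift_cons {i : ι} (m : FactorQuotient N i) (w : Word (FactorQuotient N)) (h1 h2) :
    wordLift N (cons m w h1 h2) = of (cosetRep (N i) m) * wordLift N w := by
  simp [wordLift]

abbrev WordTail := Σ i, {w : Word (FactorQuotient N) // w.fstIdx ≠ some i}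

abbrev TailCoprod := CoprodI fun j : WordTail N => N j.1

noncomputable def conjFactor (j : WordTail N) : N j.1 →* CoprodI G :=
  (MulAut.conj (wordLift N j.2.1)⁻¹).toMonoidHom.comp (of.comp (N j.1).subtype)

theorem conjFactor_apply (j : WordTail N) (n : N j.1) :
    conjFactor N j n = (wordLift N j.2.1)⁻¹ * of (n : G j.1) * wordLift N j.2.1 := by
  simp [conjFactor]

theorem range_conjFactor_empty (i : ι) (h : (empty : Word (FactorQuotient N)).fstIdx ≠ some i) :
    (conjFactor N ⟨i, empty, h⟩).range = (N i).map of := by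
  ext x
  simp [conjFactor_apply]

noncomputable def conjLift : TailCoprod N →* CoprodI G :=
  lift (conjFactor N)

abbrev NormalForm := Word (FactorQuotient N) × TailCoprod N

noncomputable def evalNormalForm (s : NormalForm N) : CoprodI G :=
  wordLift N s.1 * conjLift N s.2

variable [∀ i, DecidableEq (G i ⧸ N i)]

theorem wordLift_rcons {i : ι} (p : Pair (FactorQuotient N) i) :
    wordLift N (rcons p) = of (cosetRep (N i) p.head) * wordLift N p.tail := by
  unfold rcons
  split_ifs with h
  · rw [h, cosetRep_one, map_one, one_mul]
  · exact wordLift_cons N _ _ _ _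

variable [DecidableEq ι]

theorem wordLift_eq_equivPair (i : ι) (w : Word (FactorQuotient N)) :
    wordLift N w =
      of (cosetRep (N i) (equivPair i w).head) * wordLift N (equivPair i w).tail := by
  rw [← wordLift_rcons, ← equivPair_symm, Equiv.symm_apply_apply]

theorem wordLift_of_smul {i : ι} (m : FactorQuotient N i) (w : Word (FactorQuotient N)) :
    wordLift N (of m • w) =
      of (cosetRep (N i) (m * (equivPair i w).head)) * wordLift N (equivPair i w).tail := by
  rw [of_smul_def, wordLift_rcons]

noncomputable def ofTail (i : ι) (w : Word (FactorQuotient N)) : N i →* TailCoprod N :=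
  of (M := fun j : WordTail N => N j.1) (i := ⟨i, (equivPair i w).tail, (equivPair i w).fstIdx_ne⟩)

theorem ofTail_of_smul {i : ι} (m : FactorQuotient N i) (w : Word (FactorQuotient N)) :
    ofTail N i (of m • w) = ofTail N i w := by
  have h : (⟨(equivPair i (of m • w)).tail, (equivPair i (of m • w)).fstIdx_ne⟩ :
      {r : Word (FactorQuotient N) // r.fstIdx ≠ some i}) =
      ⟨(equivPair i w).tail, (equivPair i w).fstIdx_ne⟩ :=
    Subtype.ext (by rw [equivPair_smul_same])
  unfold ofTail
  rw [h]

theorem ofTail_of_fstIdx_ne {i : ι} {w : Word (FactorQuotient N)} (h : w.fstIdx ≠ some i) :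
    ofTail N i w = of (M := fun j : WordTail N => N j.1) (i := ⟨i, w, h⟩) := by
  have h' : (⟨(equivPair i w).tail, (equivPair i w).fstIdx_ne⟩ :
      {r : Word (FactorQuotient N) // r.fstIdx ≠ some i}) = ⟨w, h⟩ :=
    Subtype.ext (by rw [equivPair_eq_of_fstIdx_ne h])
  unfold ofTail
  rw [h']

theorem conjLift_ofTail (i : ι) (w : Word (FactorQuotient N)) (n : N i) :
    conjLift N (ofTail N i w n) =
      (wordLift N (equivPair i w).tail)⁻¹ * of (n : G i) * wordLift N (equivPair i w).tail := by
  rw [ofTail, conjLift, lift_of, conjFactor_apply]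

noncomputable def factorSMul (i : ι) (x : G i) (s : NormalForm N) : NormalForm N :=
  (of (M := FactorQuotient N) (x : G i ⧸ N i) • s.1,
    ofTail N i s.1 (cosetCocycle (N i) x (equivPair i s.1).head) * s.2)

theorem factorSMul_of_fstIdx_ne {i : ι} {w : Word (FactorQuotient N)} (h : w.fstIdx ≠ some i)
    (x : G i) (f : TailCoprod N) :
    factorSMul N i x (w, f) = (of (M := FactorQuotient N) (x : G i ⧸ N i) • w,
      of (M := fun j : WordTail N => N j.1) (i := ⟨i, w, h⟩) (cosetCocycle (N i) x 1) * f) := by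
  rw [factorSMul, ofTail_of_fstIdx_ne N h, equivPair_eq_of_fstIdx_ne h]

theorem factorSMul_one (i : ι) (s : NormalForm N) : factorSMul N i 1 s = s := by
  simp [factorSMul]

theorem factorSMul_mul (i : ι) (x y : G i) (s : NormalForm N) :
    factorSMul N i (x * y) s = factorSMul N i x (factorSMul N i y s) := by
  simp only [factorSMul, QuotientGroup.mk_mul, map_mul, mul_smul, ofTail_of_smul,
    equivPair_smul_same, cosetCocycle_mul, mul_assoc]

theorem evalNormalForm_factorSMul {i : ι} (x : G i) (s : NormalForm N) :
    evalNormalForm N (factorSMul N i x s) = of x * evalNormalForm N s := by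
  have hc := cosetRep_mul_cosetCocycle (N i) x (equivPair i s.1).head
  rw [evalNormalForm, evalNormalForm, wordLift_eq_equivPair N i s.1]
  simp only [factorSMul, wordLift_of_smul, map_mul, ofTail, conjLift, lift_of, conjFactor_apply,
    mul_assoc, mul_inv_cancel_left]
  rw [← mul_assoc, ← map_mul, hc, map_mul, mul_assoc]

noncomputable def normalFormAction : CoprodI G →* Function.End (NormalForm N) :=
  lift fun i =>
    { toFun := factorSMul N i
      map_one' := funext (factorSMul_one N i)
      map_mul' := fun x y => funext (factorSMul_mul N i x y) }

theorem normalFormAction_of {i : ι} (x : G i) (s : NormalForm N) :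
    normalFormAction N (of x) s = factorSMul N i x s := by
  rw [normalFormAction, lift_of]
  rfl

theorem normalFormAction_mul (g h : CoprodI G) (s : NormalForm N) :
    normalFormAction N (g * h) s = normalFormAction N g (normalFormAction N h s) := by
  rw [map_mul]
  rfl

theorem normalFormAction_inv_apply (g : CoprodI G) (s : NormalForm N) :
    normalFormAction N g⁻¹ (normalFormAction N g s) = s := by
  rw [← normalFormAction_mul, inv_mul_cancel, map_one]
  rfl

theorem evalNormalForm_normalFormAction (g : CoprodI G) (s : NormalForm N) :
    evalNormalForm N (normalFormAction N g s) = g * evalNormalForm N s := by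
  induction g using CoprodI.induction_on generalizing s with
  | one => rw [map_one, one_mul]; rfl
  | of x => rw [normalFormAction_of, evalNormalForm_factorSMul]
  | mul g h hg hh => rw [normalFormAction_mul, hg, hh, mul_assoc]

theorem normalFormAction_wordLift (w : Word (FactorQuotient N)) (f : TailCoprod N) :
    normalFormAction N (wordLift N w) (empty, f) = (w, f) := by
  induction w using Word.consRecOn with
  | empty => rw [wordLift_empty, map_one]; rfl
  | cons i m w h1 h2 ih =>
    rw [wordLift_cons, normalFormAction_mul, ih, normalFormAction_of,
      factorSMul_of_fstIdx_ne N h1, mk_cosetRep, cosetCocycle_cosetRep, map_one, one_mul,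
      ← cons_eq_smul]

theorem normalFormAction_conjLift (u f : TailCoprod N) :
    normalFormAction N (conjLift N u) (empty, f) = (empty, u * f) := by
  induction u using CoprodI.induction_on generalizing f with
  | one => rw [map_one, one_mul]; rfl
  | @of j n =>
    obtain ⟨i, r, hr⟩ := j
    have hn : ((n : G i) : G i ⧸ N i) = 1 := (QuotientGroup.eq_one_iff _).2 n.2
    rw [conjLift, lift_of, conjFactor_apply, normalFormAction_mul, normalFormAction_mul,
      normalFormAction_wordLift, normalFormAction_of, factorSMul_of_fstIdx_ne N hr, hn, map_one,
      one_smul, cosetCocycle_of_mem _ n.2, ← normalFormAction_wordLift N r,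
      normalFormAction_inv_apply]
  | mul u v hu hv => rw [map_mul, normalFormAction_mul, hv, hu, mul_assoc]

theorem conjLift_injective : Injective (conjLift N) := by
  refine (injective_iff_map_eq_one _).2 fun u hu => ?_
  have h := normalFormAction_conjLift N u 1
  rw [hu, map_one, mul_one] at h
  exact (congrArg Prod.snd h).symm

theorem inv_mul_of_mul_mem_range_conjLift (g : CoprodI G) {i : ι} {n : G i} (hn : n ∈ N i) :
    g⁻¹ * of n * g ∈ (conjLift N).range := by
  set s := normalFormAction N g (empty, 1)
  have hg : evalNormalForm N s = g := by
    rw [evalNormalForm_normalFormAction, evalNormalForm, wordLift_empty, map_one, mul_one,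
      mul_one]
  have hc := Subgroup.Normal.conj_mem' inferInstance n hn (cosetRep (N i) (equivPair i s.1).head)
  refine ⟨s.2⁻¹ * ofTail N i s.1 ⟨_, hc⟩ * s.2, ?_⟩
  rw [← hg, evalNormalForm, wordLift_eq_equivPair N i s.1, map_mul, map_mul, map_inv,
    conjLift_ofTail]
  simp only [map_mul, map_inv]
  group

theorem range_conjLift :
    (conjLift N).range =
      Subgroup.normalClosure (⋃ i, (of : G i →* CoprodI G) '' (N i : Set (G i))) := by
  apply le_antisymm
  · rw [conjLift, range_eq_iSup]
    refine iSup_le fun j => ?_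
    rintro _ ⟨n, rfl⟩
    have hn : of (n : G j.1) ∈
        Subgroup.normalClosure (⋃ i, (of : G i →* CoprodI G) '' (N i : Set (G i))) :=
      Subgroup.subset_normalClosure (Set.mem_iUnion_of_mem j.1 ⟨n, n.2, rfl⟩)
    rw [conjFactor_apply]
    exact Subgroup.normalClosure_normal.conj_mem' _ hn (wordLift N j.2.1)
  · refine (Subgroup.closure_le _).2 fun x hx => ?_
    obtain ⟨_, ha, hax⟩ := Group.mem_conjugatesOfSet_iff.1 hx
    obtain ⟨i, n, hn, rfl⟩ := Set.mem_iUnion.1 ha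
    obtain ⟨c, rfl⟩ := isConj_iff.1 hax
    simpa using inv_mul_of_mul_mem_range_conjLift N c⁻¹ hn

end NormalClosure

section SingleFactor

variable {ι : Type*} [DecidableEq ι] {G : ι → Type*} [∀ i, Group (G i)] (i₀ : ι)
  (N : Subgroup (G i₀)) [N.Normal]

instance normal_update_bot (i : ι) :
    (Function.update (fun i => (⊥ : Subgroup (G i))) i₀ N i).Normal := by
  rcases eq_or_ne i i₀ with rfl | h
  · rw [Function.update_self]
    infer_instance
  · rw [Function.update_of_ne h]
    infer_instance

theorem normalClosure_iUnion_update_bot :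
    Subgroup.normalClosure (⋃ i, (of : G i →* CoprodI G) ''
      (Function.update (fun i => (⊥ : Subgroup (G i))) i₀ N i : Set (G i))) =
      Subgroup.normalClosure ((of : G i₀ →* CoprodI G) '' (N : Set (G i₀))) := by
  apply le_antisymm
  · refine Subgroup.normalClosure_le_normal (Set.iUnion_subset fun i => ?_)
    rcases eq_or_ne i i₀ with rfl | h
    · rw [Function.update_self]
      exact Subgroup.subset_normalClosure
    · rintro _ ⟨x, hx, rfl⟩
      rw [Function.update_of_ne h, Subgroup.coe_bot, Set.mem_singleton_iff] at hx
      rw [hx, map_one]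
      exact one_mem _
  · exact Subgroup.normalClosure_mono
      (Set.subset_iUnion_of_subset i₀ (by rw [Function.update_self]))

end SingleFactor

end Monoid.CoprodI

open Monoid.CoprodI in
theorem statement0_general {I : Type*} (G : I → Type*) [∀ i, Group (G i)]
    (i₀ : I) (N : Subgroup (G i₀)) [N.Normal]
    (H : Subgroup (Monoid.CoprodI G))
    (hH : H = Subgroup.normalClosure
      ((Monoid.CoprodI.of : G i₀ →* Monoid.CoprodI G) '' (N : Set (G i₀)))) :
    ∃ K : Subgroup (Monoid.CoprodI G), K ≤ H ∧
      Function.Injective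
        (Monoid.Coprod.lift
          (Subgroup.map (Monoid.CoprodI.of : G i₀ →* Monoid.CoprodI G) N).subtype
          K.subtype) ∧
      MonoidHom.range
        (Monoid.Coprod.lift
          (Subgroup.map (Monoid.CoprodI.of : G i₀ →* Monoid.CoprodI G) N).subtype
          K.subtype) = H := by
  classical
  set Ns := Function.update (fun i => (⊥ : Subgroup (G i))) i₀ N with hNs
  let j₀ : WordTail Ns := ⟨i₀, Word.empty, by simp [Word.fstIdx]⟩
  have hN : (conjFactor Ns j₀).range = N.map of := by
    rw [range_conjFactor_empty, hNs, Function.update_self]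
  have hH' : (lift (conjFactor Ns)).range = H := by
    rw [hH, ← conjLift, range_conjLift, normalClosure_iUnion_update_bot]
  obtain ⟨K, hK, hinj, hrange⟩ :=
    exists_free_factor_complement (conjFactor Ns) (conjLift_injective Ns) j₀
  rw [hN] at hinj hrange
  rw [hH'] at hK hrange
  exact ⟨K, hK, hinj, hrange⟩

/-- A nontrivial normal subgroup `N` of a factor `G i₀` is a free factor of its
normal closure `H` in the free product `∐ᵢ G i`: there is a subgroup `K ≤ H` such
that the canonical map `N ∗ K →* ∐ᵢ G i` is injective with range `H`. -/
theorem statement0 {I : Type*} (G : I → Type*) [∀ i, Group (G i)]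
    [∀ i, Nontrivial (G i)] (i₀ : I) (N : Subgroup (G i₀)) [N.Normal] (hN : N ≠ ⊥)
    (H : Subgroup (Monoid.CoprodI G))
    (hH : H = Subgroup.normalClosure
      ((Monoid.CoprodI.of : G i₀ →* Monoid.CoprodI G) '' (N : Set (G i₀)))) :
    ∃ K : Subgroup (Monoid.CoprodI G), K ≤ H ∧
      Function.Injective
        (Monoid.Coprod.lift
          (Subgroup.map (Monoid.CoprodI.of : G i₀ →* Monoid.CoprodI G) N).subtype
          K.subtype) ∧
      MonoidHom.range
        (Monoid.Coprod.lift
          (Subgroup.map (Monoid.CoprodI.of : G i₀ →* Monoid.CoprodI G) N).subtype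
          K.subtype) = H :=
  statement0_general G i₀ N H hH
end

section
/- Let (G_i)_{i∈I} be a family of nontrivial groups, let i₀ ∈ I, and let N be a normal subgroup of G_{i₀}. Let H be the normal closure in the free product ∐_{i∈I} G_i of the image ι_{i₀}(N) of N under the canonical inclusion ι_{i₀} : G_{i₀} → ∐_{i∈I} G_i. Then H ∩ ι_{i₀}(G_{i₀}) = ι_{i₀}(N); i.e., the intersection of H with the image of the canonical inclusion of G_{i₀} equals the image of N. -/
/-! The projection `r` of the free product onto the factor `G i₀` is a retraction of `ι_{i₀}`.
The preimage `r⁻¹(N)` is normal and contains `ι_{i₀}(N)`, hence contains its normal closure;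
so if `ι_{i₀}(g)` lies in the normal closure, then `g = r (ι_{i₀} g) ∈ N`. -/

open Function

namespace Subgroup

variable {A B : Type*} [Group A] [Group B]

theorem normalClosure_image_le_comap_of_leftInverse {f : A →* B} {r : B →* A}
    (hfr : LeftInverse r f) (N : Subgroup A) [N.Normal] :
    normalClosure (f '' N) ≤ N.comap r := by
  refine normalClosure_le_normal ?_
  rintro _ ⟨n, hn, rfl⟩
  simpa [hfr n] using hn

theorem normalClosure_image_inf_range_of_leftInverse {f : A →* B} {r : B →* A}
    (hfr : LeftInverse r f) (N : Subgroup A) [N.Normal] :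
    normalClosure (f '' N) ⊓ f.range = N.map f := by
  refine le_antisymm ?_ (le_inf ?_ (map_le_range f N))
  · rintro _ ⟨hx, a, rfl⟩
    have ha : r (f a) ∈ N := normalClosure_image_le_comap_of_leftInverse hfr N hx
    exact ⟨a, by rwa [hfr a] at ha, rfl⟩
  · rw [← coe_map]
    exact subset_normalClosure

end Subgroup

theorem statement1_general {I : Type*} (G : I → Type*) [∀ i, Group (G i)]
    (i₀ : I) (N : Subgroup (G i₀)) [N.Normal]
    (H : Subgroup (Monoid.CoprodI G))
    (hH : H = Subgroup.normalClosure
      ((Monoid.CoprodI.of : G i₀ →* Monoid.CoprodI G) '' (N : Set (G i₀)))) :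
    H ⊓ (Monoid.CoprodI.of : G i₀ →* Monoid.CoprodI G).range =
      Subgroup.map (Monoid.CoprodI.of : G i₀ →* Monoid.CoprodI G) N := by
  classical
  subst hH
  exact Subgroup.normalClosure_image_inf_range_of_leftInverse (Monoid.CoprodI.of_leftInverse i₀) N

/-- The intersection of the normal closure `H` of `ι_{i₀}(N)` in the free product
with the image of `ι_{i₀}` is exactly `ι_{i₀}(N)`. -/
theorem statement1 {I : Type*} (G : I → Type*) [∀ i, Group (G i)]
    [∀ i, Nontrivial (G i)] (i₀ : I) (N : Subgroup (G i₀)) [N.Normal]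
    (H : Subgroup (Monoid.CoprodI G))
    (hH : H = Subgroup.normalClosure
      ((Monoid.CoprodI.of : G i₀ →* Monoid.CoprodI G) '' (N : Set (G i₀)))) :
    H ⊓ (Monoid.CoprodI.of : G i₀ →* Monoid.CoprodI G).range =
      Subgroup.map (Monoid.CoprodI.of : G i₀ →* Monoid.CoprodI G) N :=
  statement1_general G i₀ N H hH
end
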